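/- Let n ≥ 2, m ≥ n, and 1 ≤ i < j ≤ n with 1 ≤ m − n ≤ j − i. Then √(I_m^i + I_m^j) = L_{j,n+1−i,2} = ⟨x_0,…,x_{j−1}, y_0,…,y_{n−i}, z_0, z_1⟩; in particular this radical is a prime ideal, so Z_m^i ∩ Z_m^j is irreducible. -/

import Mathlib

noncomputable section

open MvPolynomial

/-- `R N = ℂ[x_0,…,x_N, y_0,…,y_N, z_0,…,z_N]`. -/
abbrev R (N : ℕ) : Type := MvPolynomial (Fin 3 × Fin (N + 1)) ℂ

/-- the variable `x_i` (for `i ≤ N`). -/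
def Xv (N i : ℕ) : R N := if h : i < N + 1 then X (0, ⟨i, h⟩) else 0
/-- the variable `y_i` (for `i ≤ N`). -/
def Yv (N i : ℕ) : R N := if h : i < N + 1 then X (1, ⟨i, h⟩) else 0
/-- the variable `z_i` (for `i ≤ N`). -/
def Zv (N i : ℕ) : R N := if h : i < N + 1 then X (2, ⟨i, h⟩) else 0

/-- `Σ_{i=p}^N x_i t^i`. -/
def xSer (N p : ℕ) : Polynomial (R N) :=
  ∑ i ∈ Finset.Icc p N, Polynomial.C (Xv N i) * Polynomial.X ^ i
/-- `Σ_{i=q}^N y_i t^i`. -/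
def ySer (N q : ℕ) : Polynomial (R N) :=
  ∑ i ∈ Finset.Icc q N, Polynomial.C (Yv N i) * Polynomial.X ^ i
/-- `Σ_{i=r}^N z_i t^i`. -/
def zSer (N r : ℕ) : Polynomial (R N) :=
  ∑ i ∈ Finset.Icc r N, Polynomial.C (Zv N i) * Polynomial.X ^ i

/-- `f_{pqr}^{(j)}`: the coefficient of `t^j` in
`f(Σ_{i=p}^N x_i t^i, Σ_{i=q}^N y_i t^i, Σ_{i=r}^N z_i t^i)` where `f = xy - z^{n+1}`. -/
def fpqr (N n p q r j : ℕ) : R N :=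
  (xSer N p * ySer N q - zSer N r ^ (n + 1)).coeff j


/-- The ideal `L_{pqr} = ⟨x_0,…,x_{p−1}, y_0,…,y_{q−1}, z_0,…,z_{r−1}⟩`. -/
def Lpqr (N p q r : ℕ) : Ideal (R N) :=
  Ideal.span ((Xv N '' Set.Iio p) ∪ (Yv N '' Set.Iio q) ∪ (Zv N '' Set.Iio r))

/-- The substitution `x_i ↦ x_{l+i}`, `y_i ↦ y_{e(n+1)−l+i}`, `z_i ↦ z_{e+i}`. -/
def shiftSub (N n l e : ℕ) : Fin 3 × Fin (N + 1) → R N := fun v =>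
  if v.1 = 0 then Xv N (l + (v.2 : ℕ))
  else if v.1 = 1 then Yv N (e * (n + 1) - l + (v.2 : ℕ))
  else Zv N (e + (v.2 : ℕ))

/-- `g_{l,e}^{(j)}`: obtained from `f^{(j)} = f_{000}^{(j)}` by the substitution
`x_i ↦ x_{l+i}`, `y_i ↦ y_{e(n+1)−l+i}`, `z_i ↦ z_{e+i}`. -/
def gle (N n l e j : ℕ) : R N := aeval (shiftSub N n l e) (fpqr N n 0 0 0 j)

/-- The ideal `⟨f^{(0)},…,f^{(m)}⟩` of `R_m`. -/
def Fideal (m n : ℕ) : Ideal (R m) :=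
  Ideal.span {g | ∃ j ≤ m, g = fpqr m n 0 0 0 j}

/-- `I_m^l = L_{l,n+1−l,1} + ⟨f^{(0)},…,f^{(m)}⟩`. -/
def Iml (m n l : ℕ) : Ideal (R m) := Lpqr m l (n + 1 - l) 1 ⊔ Fideal m n

/-- `G_m^l = ⟨g_{l,1}^{(0)},…,g_{l,1}^{(m−n−1)}⟩` (the zero ideal when `m = n`). -/
def Gml (m n l : ℕ) : Ideal (R m) :=
  Ideal.span {g | ∃ j < m - n, g = gle m n l 1 j}

/-- Points of `ℂ^{3(m+1)}`. -/
abbrev Pt (m : ℕ) := Fin 3 × Fin (m + 1) → ℂ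

/-- The zero locus in `ℂ^{3(m+1)}` of an ideal of `R_m`. -/
def zl (m : ℕ) (I : Ideal (R m)) : Set (Pt m) := {x | ∀ g ∈ I, eval x g = 0}

/-- `Z_m^l ⊆ ℂ^{3(m+1)}`, the zero locus of `I_m^l`. -/
def Zml (m n l : ℕ) : Set (Pt m) := zl m (Iml m n l)

/-- A subset of `ℂ^{3(m+1)}` is irreducible with respect to the Zariski topology,
whose closed sets are exactly the zero loci of ideals of `R_m`. -/
def IsIrredSet (m : ℕ) (S : Set (Pt m)) : Prop :=
  S.Nonempty ∧
    ∀ I₁ I₂ : Ideal (R m), S ⊆ zl m I₁ ∪ zl m I₂ → S ⊆ zl m I₁ ∨ S ⊆ zl m I₂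


/-!
Modulo `L = L_{j,n+1-i,2}` the series `x(t), y(t), z(t)` are divisible by `t^j`, `t^(n+1-i)`, `t^2`,
so `f(x,y,z)` is divisible by `t^(n+1+j-i)`; as `m ≤ n + j - i`, every `f^(k)` with `k ≤ m` lies in
`L`, whence `I_m^i + I_m^j ⊆ L`. Conversely `I_m^i + I_m^j` contains `x_{<j}`, `y_{<n+1-i}` and
`z_0`, and modulo these `f^(n+1) ≡ -z_1^(n+1)` because `n + 1 < n + 1 + j - i`; as `n + 1 ≤ m`, this
puts `z_1` in the radical. Finally `L` is generated by variables, hence prime, and by the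
Nullstellensatz the zero locus of a prime ideal is irreducible.
-/

namespace MvPolynomial

variable {σ A : Type*} [CommRing A]

theorem ker_aeval_ite_eq_span_X_image (s : Set σ) [DecidablePred (· ∈ s)] :
    RingHom.ker (aeval fun v => if v ∈ s then 0 else X v :
      MvPolynomial σ A →ₐ[A] MvPolynomial σ A) = Ideal.span (X '' s) := by
  set φ : MvPolynomial σ A →ₐ[A] MvPolynomial σ A := aeval fun v => if v ∈ s then 0 else X v
  have hφ : ∀ p, p - φ p ∈ Ideal.span (X '' s) := by
    suffices (Ideal.Quotient.mk _).comp φ.toRingHom = Ideal.Quotient.mk (Ideal.span (X '' s)) from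
      fun p => Ideal.Quotient.eq.mp (RingHom.congr_fun this p).symm
    refine ringHom_ext (fun a => by simp [φ]) fun v => ?_
    by_cases hv : v ∈ s
    · simp only [φ, RingHom.comp_apply, AlgHom.toRingHom_eq_coe, RingHom.coe_coe, aeval_X,
        if_pos hv, map_zero]
      exact (Ideal.Quotient.eq_zero_iff_mem.mpr (Ideal.subset_span (Set.mem_image_of_mem X hv))).symm
    · simp [φ, hv]
  refine le_antisymm (fun p hp => by simpa [RingHom.mem_ker.mp hp] using hφ p) ?_
  rw [Ideal.span_le]
  rintro _ ⟨v, hv, rfl⟩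
  simp [φ, hv]

theorem isPrime_span_X_image [IsDomain A] (s : Set σ) :
    (Ideal.span (X '' s : Set (MvPolynomial σ A))).IsPrime := by
  classical
  rw [← ker_aeval_ite_eq_span_X_image]
  exact RingHom.ker_isPrime _

end MvPolynomial

namespace Polynomial

variable {A : Type*} [CommRing A]

theorem X_pow_dvd_map_mk_iff {J : Ideal A} {p : A[X]} {d : ℕ} :
    X ^ d ∣ p.map (Ideal.Quotient.mk J) ↔ ∀ k < d, p.coeff k ∈ J := by
  simp [X_pow_dvd_iff, Ideal.Quotient.eq_zero_iff_mem]

theorem coeff_pow_self_of_X_dvd {p : A[X]} (h : X ∣ p) (e : ℕ) :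
    (p ^ e).coeff e = p.coeff 1 ^ e := by
  obtain ⟨q, rfl⟩ := h
  rw [mul_pow, coeff_X_pow_mul', if_pos le_rfl, Nat.sub_self, coeff_zero_eq_eval_zero,
    eval_pow, ← coeff_zero_eq_eval_zero, coeff_X_mul]

theorem coeff_sum_Icc_C_mul_X_pow {S : Type*} [Semiring S] {N : ℕ} (c : ℕ → S)
    (hc : ∀ i, N < i → c i = 0) (a : ℕ) :
    (∑ i ∈ Finset.Icc 0 N, C (c i) * X ^ i).coeff a = c a := by
  simp only [finsetSum_coeff, coeff_C_mul_X_pow, Finset.sum_ite_eq, Finset.mem_Icc]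
  split_ifs with h
  · rfl
  · exact (hc a (by omega)).symm

end Polynomial

theorem coeff_xSer (N a : ℕ) : (xSer N 0).coeff a = Xv N a :=
  Polynomial.coeff_sum_Icc_C_mul_X_pow _ (fun i h => dif_neg (by omega : ¬i < N + 1)) a

theorem coeff_ySer (N a : ℕ) : (ySer N 0).coeff a = Yv N a :=
  Polynomial.coeff_sum_Icc_C_mul_X_pow _ (fun i h => dif_neg (by omega : ¬i < N + 1)) a

theorem coeff_zSer (N a : ℕ) : (zSer N 0).coeff a = Zv N a :=
  Polynomial.coeff_sum_Icc_C_mul_X_pow _ (fun i h => dif_neg (by omega : ¬i < N + 1)) a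

section Lpqr

variable {N p q r : ℕ}

theorem Lpqr_le_iff {J : Ideal (R N)} :
    Lpqr N p q r ≤ J ↔
      (∀ a < p, Xv N a ∈ J) ∧ (∀ b < q, Yv N b ∈ J) ∧ (∀ c < r, Zv N c ∈ J) := by
  simp [Lpqr, Ideal.span_le, Set.subset_def, and_assoc]

theorem Lpqr_mono {p' q' r' : ℕ} (hp : p ≤ p') (hq : q ≤ q') (hr : r ≤ r') :
    Lpqr N p q r ≤ Lpqr N p' q' r' :=
  Ideal.span_mono <| Set.union_subset_union
    (Set.union_subset_union (Set.image_mono (Set.Iio_subset_Iio hp))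
      (Set.image_mono (Set.Iio_subset_Iio hq)))
    (Set.image_mono (Set.Iio_subset_Iio hr))

theorem Lpqr_eq_span_X :
    Lpqr N p q r = Ideal.span (MvPolynomial.X '' {v : Fin 3 × Fin (N + 1) |
      v.1 = 0 ∧ (v.2 : ℕ) < p ∨ v.1 = 1 ∧ (v.2 : ℕ) < q ∨ v.1 = 2 ∧ (v.2 : ℕ) < r}) := by
  refine le_antisymm (Lpqr_le_iff.mpr ⟨fun a ha => ?_, fun a ha => ?_, fun a ha => ?_⟩) ?_
  · unfold Xv; split_ifs
    exacts [Ideal.subset_span ⟨_, Or.inl ⟨rfl, ha⟩, rfl⟩, zero_mem _]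
  · unfold Yv; split_ifs
    exacts [Ideal.subset_span ⟨_, Or.inr (Or.inl ⟨rfl, ha⟩), rfl⟩, zero_mem _]
  · unfold Zv; split_ifs
    exacts [Ideal.subset_span ⟨_, Or.inr (Or.inr ⟨rfl, ha⟩), rfl⟩, zero_mem _]
  · obtain ⟨hx, hy, hz⟩ := Lpqr_le_iff.mp (le_refl (Lpqr N p q r))
    rw [Ideal.span_le]
    rintro _ ⟨⟨c, a⟩, hv | hv | hv, rfl⟩ <;> obtain ⟨rfl, ha⟩ := hv
    · simpa [Xv, Fin.is_le] using hx a ha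
    · simpa [Yv, Fin.is_le] using hy a ha
    · simpa [Zv, Fin.is_le] using hz a ha

theorem isPrime_Lpqr : (Lpqr N p q r).IsPrime :=
  Lpqr_eq_span_X ▸ MvPolynomial.isPrime_span_X_image _

end Lpqr

section Series

variable {N n p q r : ℕ} {J : Ideal (R N)}

theorem X_pow_dvd_map_mk_series (h : Lpqr N p q r ≤ J) :
    Polynomial.X ^ (p + q) ∣ (xSer N 0 * ySer N 0).map (Ideal.Quotient.mk J) ∧
      Polynomial.X ^ r ∣ (zSer N 0).map (Ideal.Quotient.mk J) := by
  obtain ⟨hx, hy, hz⟩ := Lpqr_le_iff.mp h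
  have hx' : Polynomial.X ^ p ∣ (xSer N 0).map (Ideal.Quotient.mk J) :=
    Polynomial.X_pow_dvd_map_mk_iff.mpr fun a ha => coeff_xSer N a ▸ hx a ha
  have hy' : Polynomial.X ^ q ∣ (ySer N 0).map (Ideal.Quotient.mk J) :=
    Polynomial.X_pow_dvd_map_mk_iff.mpr fun b hb => coeff_ySer N b ▸ hy b hb
  rw [pow_add, Polynomial.map_mul]
  exact ⟨mul_dvd_mul (α := Polynomial (R N ⧸ J)) hx' hy',
    Polynomial.X_pow_dvd_map_mk_iff.mpr fun c hc => coeff_zSer N c ▸ hz c hc⟩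

theorem fpqr_mem_of_Lpqr_le (h : Lpqr N p q r ≤ J) (hpq : p + q ≤ (n + 1) * r) {k : ℕ}
    (hk : k < p + q) : fpqr N n 0 0 0 k ∈ J := by
  obtain ⟨hxy, hz⟩ := X_pow_dvd_map_mk_series h
  refine Polynomial.X_pow_dvd_map_mk_iff.mp ?_ k hk
  rw [Polynomial.map_sub, Polynomial.map_pow]
  refine dvd_sub hxy ((pow_dvd_pow Polynomial.X hpq).trans ?_)
  rw [mul_comm, pow_mul]
  exact pow_dvd_pow_of_dvd (α := Polynomial (R N ⧸ J)) hz _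

theorem Fideal_le_Lpqr {m : ℕ} (hm : m < p + q) (hpq : p + q ≤ (n + 1) * r) :
    Fideal m n ≤ Lpqr m p q r := by
  rw [Fideal, Ideal.span_le]
  rintro _ ⟨k, hk, rfl⟩
  exact fpqr_mem_of_Lpqr_le le_rfl hpq (by omega)

theorem Zv_one_pow_mem (h : Lpqr N p q 1 ≤ J) (hf : fpqr N n 0 0 0 (n + 1) ∈ J)
    (hpq : n + 1 < p + q) : Zv N 1 ^ (n + 1) ∈ J := by
  obtain ⟨hxy, hz⟩ := X_pow_dvd_map_mk_series h
  have key : Ideal.Quotient.mk J (fpqr N n 0 0 0 (n + 1)) =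
      -Ideal.Quotient.mk J (Zv N 1) ^ (n + 1) := by
    rw [fpqr, ← Polynomial.coeff_map, Polynomial.map_sub, Polynomial.coeff_sub,
      Polynomial.X_pow_dvd_iff.mp hxy _ hpq, Polynomial.map_pow,
      Polynomial.coeff_pow_self_of_X_dvd (pow_one (Polynomial.X : Polynomial (R N ⧸ J)) ▸ hz),
      Polynomial.coeff_map, coeff_zSer, zero_sub]
  rwa [← Ideal.Quotient.eq_zero_iff_mem, map_pow, ← neg_eq_zero, ← key,
    Ideal.Quotient.eq_zero_iff_mem]

end Series

section ZeroLocus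

variable {m : ℕ}

theorem zl_sup (I J : Ideal (R m)) : zl m (I ⊔ J) = zl m I ∩ zl m J := by
  ext x
  refine ⟨fun h => ⟨fun g hg => h g (Ideal.mem_sup_left hg),
    fun g hg => h g (Ideal.mem_sup_right hg)⟩, ?_⟩
  rintro ⟨h1, h2⟩ g hg
  obtain ⟨a, ha, b, hb, rfl⟩ := Submodule.mem_sup.mp hg
  rw [map_add, h1 a ha, h2 b hb, add_zero]

theorem zl_radical (I : Ideal (R m)) : zl m I.radical = zl m I :=
  le_antisymm (zeroLocus_anti_mono I.le_radical)
    (le_zeroLocus_iff_le_vanishingIdeal.mpr (radical_le_vanishingIdeal_zeroLocus I))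

theorem isIrredSet_zl_of_isPrime {I : Ideal (R m)} (hI : I.IsPrime) : IsIrredSet m (zl m I) := by
  have hvan : vanishingIdeal ℂ (zl m I) = I := IsPrime.vanishingIdeal_zeroLocus I
  refine ⟨Set.nonempty_iff_ne_empty.mpr fun h => hI.ne_top ?_, fun I₁ I₂ hsub => ?_⟩
  · rw [← hvan, h, vanishingIdeal_empty]
  have hmul : I₁ * I₂ ≤ I := by
    rw [Ideal.mul_le, ← hvan]
    intro g₁ hg₁ g₂ hg₂ x hx
    rcases hsub hx with hx | hx
    · simp [hx g₁ hg₁]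
    · simp [hx g₂ hg₂]
  rcases hI.mul_le.mp hmul with h | h
  exacts [Or.inl (zeroLocus_anti_mono h), Or.inr (zeroLocus_anti_mono h)]

end ZeroLocus

theorem stmt8_general (n m : ℕ) (i j : ℕ)
    (hij : i < j) (hj : j ≤ n)
    (h1 : 1 ≤ m - n) (h2 : m - n ≤ j - i) :
    (Iml m n i ⊔ Iml m n j).radical = Lpqr m j (n + 1 - i) 2 ∧
    (Lpqr m j (n + 1 - i) 2).IsPrime ∧
    IsIrredSet m (Zml m n i ∩ Zml m n j) := by
  set J := Iml m n i ⊔ Iml m n j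
  have hL : (Lpqr m j (n + 1 - i) 2).IsPrime := isPrime_Lpqr
  have hF : Fideal m n ≤ Lpqr m j (n + 1 - i) 2 := Fideal_le_Lpqr (by omega) (by omega)
  have hJL : J ≤ Lpqr m j (n + 1 - i) 2 :=
    sup_le (sup_le (Lpqr_mono hij.le le_rfl (by omega)) hF)
      (sup_le (Lpqr_mono le_rfl (by omega) (by omega)) hF)
  have hJ : Lpqr m j (n + 1 - i) 1 ≤ J := by
    obtain ⟨-, hy, hz⟩ :=
      Lpqr_le_iff.mp (le_sup_left.trans le_sup_left : Lpqr m i (n + 1 - i) 1 ≤ J)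
    obtain ⟨hx, -, -⟩ :=
      Lpqr_le_iff.mp (le_sup_left.trans le_sup_right : Lpqr m j (n + 1 - j) 1 ≤ J)
    exact Lpqr_le_iff.mpr ⟨hx, hy, hz⟩
  have hLJ : Lpqr m j (n + 1 - i) 2 ≤ J.radical := by
    obtain ⟨hx, hy, hz⟩ := Lpqr_le_iff.mp hJ
    refine Lpqr_le_iff.mpr ⟨fun a ha => J.le_radical (hx a ha), fun b hb => J.le_radical (hy b hb),
      fun c hc => ?_⟩
    have hf : fpqr m n 0 0 0 (n + 1) ∈ J :=
      Ideal.mem_sup_left (Ideal.mem_sup_right (Ideal.subset_span ⟨n + 1, by omega, rfl⟩))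
    interval_cases c
    exacts [J.le_radical (hz 0 one_pos), ⟨n + 1, Zv_one_pow_mem hJ hf (by omega)⟩]
  have hrad : J.radical = Lpqr m j (n + 1 - i) 2 := le_antisymm (hL.radical_le_iff.mpr hJL) hLJ
  refine ⟨hrad, hL, ?_⟩
  rw [Zml, Zml, ← zl_sup, ← zl_radical, hrad]
  exact isIrredSet_zl_of_isPrime hL

theorem stmt8 (n m : ℕ) (hn : 2 ≤ n) (hm : n ≤ m) (i j : ℕ)
    (hi : 1 ≤ i) (hij : i < j) (hj : j ≤ n)
    (h1 : 1 ≤ m - n) (h2 : m - n ≤ j - i) :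
    (Iml m n i ⊔ Iml m n j).radical = Lpqr m j (n + 1 - i) 2 ∧
    (Lpqr m j (n + 1 - i) 2).IsPrime ∧
    IsIrredSet m (Zml m n i ∩ Zml m n j) :=
  stmt8_general n m i j hij hj h1 h2
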